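/- arXiv:0709.2995 — 3 statements merged into one kernel-verified Lean document; each statement's English description precedes it below -/
import Mathlib

section
/- Let H, K, L be Hilbert spaces, and let Δ ⊆ L(H,K) and Γ ⊆ L(K,L) be concrete C*-modules such that [Γ*ΓΔ] ⊆ Δ. Then the closed linear span [ΓΔ] ⊆ L(H,L) is a concrete C*-module, i.e., [[ΓΔ][ΓΔ]*[ΓΔ]] = [ΓΔ]. -/
/-!
From `γδ (γ'δ')* γ''δ'' = γ (δδ'* (γ'* γ'' δ''))` the closed span `W = [ΓΔ]` satisfies
`W W* W ⊆ W`, and every such closed subspace satisfies `[W W* W] = W`. For `v ∈ W` put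
`a = v* v` and `e = 1 - a / c` with `c > ‖v‖²`. Since `1 - eⁿ` is a polynomial in `a` without
constant term, `v (1 - eⁿ)` is a combination of the elements `(v v*)(v aᵏ)` of `W W* W`;
and `‖v eⁿ‖² = ‖a e²ⁿ‖ ≤ sup_{0 ≤ t ≤ c} t (1 - t/c)²ⁿ ≤ c / 2n`, so `v (1 - eⁿ) → v`.
-/

noncomputable section
open ContinuousLinearMap

/-- Closed linear span of a subset of a complex normed space. -/
def clspan {E : Type*} [NormedAddCommGroup E] [NormedSpace ℂ E] (S : Set E) : Set E :=
  ((Submodule.span ℂ S).topologicalClosure : Set E)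

open Filter Topology

section ClosedSpan

variable {E F : Type*} [NormedAddCommGroup E] [NormedSpace ℂ E]
  [NormedAddCommGroup F] [NormedSpace ℂ F]

theorem isClosed_clspan (S : Set E) : IsClosed (clspan S) :=
  Submodule.isClosed_topologicalClosure _

theorem subset_clspan (S : Set E) : S ⊆ clspan S :=
  fun _ hx => Submodule.le_topologicalClosure _ (Submodule.subset_span hx)

theorem clspan_subset {S : Set E} {N : Submodule ℂ E} (hN : IsClosed (N : Set E))
    (h : S ⊆ N) : clspan S ⊆ N :=
  Submodule.topologicalClosure_minimal _ (Submodule.span_le.mpr h) hN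

theorem clspan_subset_preimage {σ : ℂ →+* ℂ} (f : E →SL[σ] F) {S : Set E}
    {N : Submodule ℂ F} (hN : IsClosed (N : Set F)) (h : S ⊆ f ⁻¹' N) :
    clspan S ⊆ f ⁻¹' N :=
  clspan_subset (N := N.comap (f : E →ₛₗ[σ] F)) (hN.preimage f.continuous) h

end ClosedSpan

section TernaryRing

variable {E F : Type*} [NormedAddCommGroup E] [InnerProductSpace ℂ E] [CompleteSpace E]
  [NormedAddCommGroup F] [InnerProductSpace ℂ F] [CompleteSpace F]

theorem comp_adjoint_comp_mem_of_mem_clspan {N : Submodule ℂ (E →L[ℂ] F)}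
    (hN : IsClosed (N : Set (E →L[ℂ] F))) {S₁ S₂ S₃ : Set (E →L[ℂ] F)}
    (h : ∀ a ∈ S₁, ∀ b ∈ S₂, ∀ c ∈ S₃, (a ∘L adjoint b) ∘L c ∈ N)
    {a b c : E →L[ℂ] F} (ha : a ∈ clspan S₁) (hb : b ∈ clspan S₂) (hc : c ∈ clspan S₃) :
    (a ∘L adjoint b) ∘L c ∈ N := by
  have h₃ : ∀ a ∈ S₁, ∀ b ∈ S₂, (a ∘L adjoint b) ∘L c ∈ N := fun a ha b hb =>
    clspan_subset_preimage (compL ℂ E F F (a ∘L adjoint b)) hN (h a ha b hb) hc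
  have h₂ : ∀ a ∈ S₁, (a ∘L adjoint b) ∘L c ∈ N := fun a ha =>
    clspan_subset_preimage (((compL ℂ E F F).flip c ∘L compL ℂ F E F a).comp
      (adjoint : (E →L[ℂ] F) ≃ₗᵢ⋆[ℂ] (F →L[ℂ] E)).toContinuousLinearEquiv.toContinuousLinearMap)
      hN (h₃ a ha) hb
  exact clspan_subset_preimage ((compL ℂ E F F).flip c ∘L (compL ℂ F E F).flip (adjoint b))
    hN h₂ ha

theorem mul_mul_one_sub_pow_le_one {s : ℝ} (hs₁ : s ≤ 1) (m : ℕ) :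
    m * (s * (1 - s) ^ m) ≤ 1 := by
  have hpow : (1 - s) ^ m ≤ Real.exp (-(m * s)) := by
    calc (1 - s) ^ m ≤ Real.exp (-s) ^ m :=
          pow_le_pow_left₀ (by linarith) (by linarith [Real.add_one_le_exp (-s)]) m
      _ = Real.exp (-(m * s)) := by rw [← Real.exp_nat_mul]; ring_nf
  calc m * (s * (1 - s) ^ m) = (m * s) * (1 - s) ^ m := by ring
    _ ≤ Real.exp (m * s) * Real.exp (-(m * s)) := by
      gcongr
      linarith [Real.add_one_le_exp (m * s)]
    _ = 1 := by rw [← Real.exp_add, add_neg_cancel, Real.exp_zero]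

theorem CStarAlgebra.natCast_mul_norm_mul_one_sub_smul_pow_le {A : Type*} [CStarAlgebra A]
    [PartialOrder A] [StarOrderedRing A] {a : A} (ha : 0 ≤ a) {c : ℝ} (hc : 0 < c)
    (hac : ‖a‖ ≤ c) (m : ℕ) :
    m * ‖a * (1 - c⁻¹ • a) ^ m‖ ≤ c := by
  have hcfc : cfc (fun t : ℝ => m * (t * (1 - c⁻¹ * t) ^ m)) a =
      (m : ℝ) • (a * (1 - c⁻¹ • a) ^ m) := by
    rw [cfc_const_mul .., cfc_mul .., cfc_pow .., cfc_sub .., cfc_const_mul .., cfc_id' ..,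
      cfc_const_one ..]
  have hspec : ∀ t ∈ spectrum ℝ a, 0 ≤ t ∧ t ≤ c := fun t ht =>
    ⟨spectrum_nonneg_of_nonneg ha ht, (le_algebraMap_iff_spectrum_le (r := c)).mp
      ((CStarAlgebra.norm_le_iff_le_algebraMap a hc.le ha).mp hac) t ht⟩
  calc (m : ℝ) * ‖a * (1 - c⁻¹ • a) ^ m‖
      = ‖cfc (fun t : ℝ => m * (t * (1 - c⁻¹ * t) ^ m)) a‖ := by
        rw [hcfc, norm_smul, Real.norm_natCast]
    _ ≤ c := by
      refine norm_cfc_le hc.le fun t ht => ?_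
      obtain ⟨ht₀, htc⟩ := hspec t ht
      have hs₁ : c⁻¹ * t ≤ 1 := by rw [inv_mul_le_iff₀ hc]; linarith
      have hs₁' : 0 ≤ 1 - c⁻¹ * t := by linarith
      rw [Real.norm_of_nonneg (by positivity)]
      calc (m : ℝ) * (t * (1 - c⁻¹ * t) ^ m) = c * (m * (c⁻¹ * t * (1 - c⁻¹ * t) ^ m)) := by
            field_simp
        _ ≤ c := mul_le_of_le_one_right hc.le (mul_mul_one_sub_pow_le_one hs₁ m)

theorem norm_comp_pow_sq (v : E →L[ℂ] F) {x : E →L[ℂ] E} (hx : IsSelfAdjoint x)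
    (hcomm : Commute (adjoint v ∘L v) x) (n : ℕ) :
    ‖v ∘L x ^ n‖ ^ 2 = ‖(adjoint v ∘L v) * x ^ (2 * n)‖ := by
  have hxn : adjoint (x ^ n) = x ^ n := by rw [← star_eq_adjoint, (hx.pow n).star_eq]
  have hstar : adjoint (v ∘L x ^ n) ∘L (v ∘L x ^ n) = x ^ n * (adjoint v ∘L v) * x ^ n := by
    rw [adjoint_comp, hxn]
    rfl
  rw [sq, ← norm_adjoint_comp_self, hstar, ← (hcomm.pow_right n).eq, mul_assoc, ← pow_add,
    two_mul]

theorem tendsto_comp_one_sub_smul_pow (v : E →L[ℂ] F) {c : ℝ} (hc : 0 < c)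
    (hvc : ‖v‖ ^ 2 ≤ c) :
    Tendsto (fun n : ℕ => v ∘L (1 - c⁻¹ • (adjoint v ∘L v)) ^ n) atTop (𝓝 0) := by
  set a := adjoint v ∘L v
  have ha : 0 ≤ a := (nonneg_iff_isPositive a).mpr (isPositive_adjoint_comp_self v)
  have hac : ‖a‖ ≤ c := by rwa [norm_adjoint_comp_self, ← sq]
  have hsq : ∀ n : ℕ, n * ‖v ∘L (1 - c⁻¹ • a) ^ n‖ ^ 2 ≤ c := by
    intro n
    have he : IsSelfAdjoint (1 - c⁻¹ • a) :=
      (IsSelfAdjoint.one _).sub ((IsSelfAdjoint.all (c⁻¹ : ℝ)).smul ha.isSelfAdjoint)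
    rw [norm_comp_pow_sq v he ((Commute.one_right a).sub_right ((Commute.refl a).smul_right _))]
    calc (n : ℝ) * ‖a * (1 - c⁻¹ • a) ^ (2 * n)‖
        ≤ ((2 * n : ℕ) : ℝ) * ‖a * (1 - c⁻¹ • a) ^ (2 * n)‖ := by gcongr; omega
      _ ≤ c := CStarAlgebra.natCast_mul_norm_mul_one_sub_smul_pow_le ha hc hac (2 * n)
  have hsqrt : Tendsto (fun n : ℕ => Real.sqrt (c / n)) atTop (𝓝 0) := by
    simpa using (tendsto_const_div_atTop_nhds_zero_nat c).sqrt
  refine squeeze_zero_norm' ?_ hsqrt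
  filter_upwards [eventually_gt_atTop 0] with n hn
  rw [Real.le_sqrt (norm_nonneg _) (by positivity), le_div_iff₀ (by positivity), mul_comm]
  exact hsq n

theorem clspan_image2_comp_adjoint_comp_eq (V : Set (E →L[ℂ] F))
    (hV : ∀ a ∈ clspan V, ∀ b ∈ clspan V, ∀ c ∈ clspan V, (a ∘L adjoint b) ∘L c ∈ clspan V) :
    clspan (Set.image2 (fun (S : F →L[ℂ] F) (T : E →L[ℂ] F) => S ∘L T)
        (Set.image2 (fun (S T : E →L[ℂ] F) => S ∘L adjoint T) (clspan V) (clspan V))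
        (clspan V)) = clspan V := by
  set W := (Submodule.span ℂ V).topologicalClosure
  set T := Set.image2 (fun (S : F →L[ℂ] F) (T : E →L[ℂ] F) => S ∘L T)
    (Set.image2 (fun (S T : E →L[ℂ] F) => S ∘L adjoint T) (clspan V) (clspan V)) (clspan V)
  set U := (Submodule.span ℂ T).topologicalClosure
  have hTW : T ⊆ W := by
    rintro _ ⟨_, ⟨a, ha, b, hb, rfl⟩, c, hc, rfl⟩
    exact hV a ha b hb c hc
  refine (clspan_subset (isClosed_clspan V) hTW).antisymm fun v hv => ?_
  set c := ‖v‖ ^ 2 + 1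
  set a := adjoint v ∘L v
  set e := 1 - c⁻¹ • a
  -- `v ∘L (a * x)` is definitionally `(v ∘L adjoint v) ∘L (v ∘L x)`.
  have hstep : ∀ x : E →L[ℂ] E, v ∘L x ∈ W → v ∘L (a * x) ∈ T := fun x hx =>
    ⟨_, ⟨v, hv, v, hv, rfl⟩, v ∘L x, hx, rfl⟩
  have hpow : ∀ n : ℕ, v ∘L e ^ n ∈ W ∧ v ∘L (1 - e ^ n) ∈ U := by
    intro n
    induction n with
    | zero =>
      rw [pow_zero, sub_self, comp_zero, one_def, comp_id]
      exact ⟨hv, U.zero_mem⟩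
    | succ n ih =>
      have hT := hstep _ ih.1
      have he : e ^ (n + 1) = e ^ n - c⁻¹ • (a * e ^ n) := by
        rw [pow_succ', sub_mul, one_mul, smul_mul_assoc]
      have he' : 1 - e ^ (n + 1) = (1 - e ^ n) + c⁻¹ • (a * e ^ n) := by
        rw [he]; abel
      rw [he', he, comp_sub, comp_add, comp_smul]
      exact ⟨W.sub_mem ih.1 (W.smul_mem _ (hTW hT)),
        U.add_mem ih.2 (U.smul_mem _ (subset_clspan T hT))⟩
  have hlim : Tendsto (fun n : ℕ => v ∘L (1 - e ^ n)) atTop (𝓝 v) := by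
    have hsub : ∀ n : ℕ, v ∘L (1 - e ^ n) = v - v ∘L e ^ n := fun n => by
      rw [comp_sub, one_def, comp_id]
    simpa only [hsub, sub_zero] using
      (tendsto_comp_one_sub_smul_pow v (c := c) (by positivity) (by linarith)).const_sub v
  exact (isClosed_clspan T).mem_of_tendsto hlim (.of_forall fun n => (hpow n).2)

end TernaryRing

theorem stmt3_general
    {H K L : Type*} [NormedAddCommGroup H] [InnerProductSpace ℂ H] [CompleteSpace H]
    [NormedAddCommGroup K] [InnerProductSpace ℂ K] [CompleteSpace K]
    [NormedAddCommGroup L] [InnerProductSpace ℂ L] [CompleteSpace L]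
    (Δ : Set (H →L[ℂ] K)) (Γ : Set (K →L[ℂ] L))
    (hΔ : clspan (Set.image2 (fun (S : K →L[ℂ] K) (T : H →L[ℂ] K) => S ∘L T)
        (Set.image2 (fun (S T : H →L[ℂ] K) => S ∘L adjoint T) Δ Δ) Δ) = Δ)
    (hΓΓΔ : clspan (Set.image2 (fun (S : K →L[ℂ] K) (T : H →L[ℂ] K) => S ∘L T)
        (Set.image2 (fun (S T : K →L[ℂ] L) => adjoint S ∘L T) Γ Γ) Δ) ⊆ Δ) :
    clspan (Set.image2 (fun (S : L →L[ℂ] L) (T : H →L[ℂ] L) => S ∘L T)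
        (Set.image2 (fun (S T : H →L[ℂ] L) => S ∘L adjoint T)
          (clspan (Set.image2 (fun (S : K →L[ℂ] L) (T : H →L[ℂ] K) => S ∘L T) Γ Δ))
          (clspan (Set.image2 (fun (S : K →L[ℂ] L) (T : H →L[ℂ] K) => S ∘L T) Γ Δ)))
        (clspan (Set.image2 (fun (S : K →L[ℂ] L) (T : H →L[ℂ] K) => S ∘L T) Γ Δ)))
      = clspan (Set.image2 (fun (S : K →L[ℂ] L) (T : H →L[ℂ] K) => S ∘L T) Γ Δ) := by
  refine clspan_image2_comp_adjoint_comp_eq _ fun a ha b hb c hc =>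
    comp_adjoint_comp_mem_of_mem_clspan (Submodule.isClosed_topologicalClosure _) ?_ ha hb hc
  rintro _ ⟨g₁, hg₁, d₁, hd₁, rfl⟩ _ ⟨g₂, hg₂, d₂, hd₂, rfl⟩ _ ⟨g₃, hg₃, d₃, hd₃, rfl⟩
  have hd : (adjoint g₂ ∘L g₃) ∘L d₃ ∈ Δ :=
    hΓΓΔ (subset_clspan _ (Set.mem_image2_of_mem (Set.mem_image2_of_mem hg₂ hg₃) hd₃))
  have hd' : (d₁ ∘L adjoint d₂) ∘L ((adjoint g₂ ∘L g₃) ∘L d₃) ∈ Δ :=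
    hΔ ▸ subset_clspan _ (Set.mem_image2_of_mem (Set.mem_image2_of_mem hd₁ hd₂) hd)
  have hassoc : ((g₁ ∘L d₁) ∘L adjoint (g₂ ∘L d₂)) ∘L (g₃ ∘L d₃) =
      g₁ ∘L ((d₁ ∘L adjoint d₂) ∘L ((adjoint g₂ ∘L g₃) ∘L d₃)) := by
    rw [adjoint_comp]
    rfl
  rw [hassoc]
  exact subset_clspan _ (Set.mem_image2_of_mem hg₁ hd')

/-- If `Δ ⊆ L(H,K)` and `Γ ⊆ L(K,L)` are concrete C*-modules with
`[Γ*ΓΔ] ⊆ Δ`, then `[ΓΔ] ⊆ L(H,L)` is a concrete C*-module: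
`[[ΓΔ][ΓΔ]*[ΓΔ]] = [ΓΔ]`. -/
theorem stmt3
    {H K L : Type*} [NormedAddCommGroup H] [InnerProductSpace ℂ H] [CompleteSpace H]
    [NormedAddCommGroup K] [InnerProductSpace ℂ K] [CompleteSpace K]
    [NormedAddCommGroup L] [InnerProductSpace ℂ L] [CompleteSpace L]
    (Δ : Set (H →L[ℂ] K)) (Γ : Set (K →L[ℂ] L))
    (hΔclosed : clspan Δ = Δ)
    (hΔ : clspan (Set.image2 (fun (S : K →L[ℂ] K) (T : H →L[ℂ] K) => S ∘L T)
        (Set.image2 (fun (S T : H →L[ℂ] K) => S ∘L adjoint T) Δ Δ) Δ) = Δ)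
    (hΓclosed : clspan Γ = Γ)
    (hΓ : clspan (Set.image2 (fun (S : L →L[ℂ] L) (T : K →L[ℂ] L) => S ∘L T)
        (Set.image2 (fun (S T : K →L[ℂ] L) => S ∘L adjoint T) Γ Γ) Γ) = Γ)
    (hΓΓΔ : clspan (Set.image2 (fun (S : K →L[ℂ] K) (T : H →L[ℂ] K) => S ∘L T)
        (Set.image2 (fun (S T : K →L[ℂ] L) => adjoint S ∘L T) Γ Γ) Δ) ⊆ Δ) :
    clspan (Set.image2 (fun (S : L →L[ℂ] L) (T : H →L[ℂ] L) => S ∘L T)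
        (Set.image2 (fun (S T : H →L[ℂ] L) => S ∘L adjoint T)
          (clspan (Set.image2 (fun (S : K →L[ℂ] L) (T : H →L[ℂ] K) => S ∘L T) Γ Δ))
          (clspan (Set.image2 (fun (S : K →L[ℂ] L) (T : H →L[ℂ] K) => S ∘L T) Γ Δ)))
        (clspan (Set.image2 (fun (S : K →L[ℂ] L) (T : H →L[ℂ] K) => S ∘L T) Γ Δ)))
      = clspan (Set.image2 (fun (S : K →L[ℂ] L) (T : H →L[ℂ] K) => S ∘L T) Γ Δ) :=
  stmt3_general Δ Γ hΔ hΓΓΔ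
end
end

section
/- Let (𝔥,𝔅,𝔅†) be a C*-base (𝔅 and 𝔅† commuting nondegenerate C*-subalgebras of L(𝔥)) and α a C*-factorization of a Hilbert space H with respect to it. Then there exists a unique representation ρ_α : 𝔅† → L(H) such that ρ_α(b†)(ξζ) = ξ(b†ζ) for all b† ∈ 𝔅†, ξ ∈ α, ζ ∈ 𝔥, and this representation is faithful and nondegenerate. -/
/-!
Every `b ∈ 𝔅†` commutes with `α*α ⊆ 𝔅`, so `b*` can be moved past each `ξᵢ* ξⱼ`:
`⟪Σ ξᵢ (b ζᵢ), Σ ξⱼ (c ζⱼ)⟫ = ⟪Σ ξᵢ ζᵢ, Σ ξⱼ (b* c ζⱼ)⟫`. With `c = b` and Cauchy–Schwarz,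
`‖Σ ξᵢ b ζᵢ‖² ≤ ‖Σ ξᵢ ζᵢ‖ ‖Σ ξᵢ b*b ζᵢ‖`, and taking the supremum over the unit ball of the
commutant of `α*α`, a *-subalgebra, upgrades this to `‖Σ ξᵢ b ζᵢ‖ ≤ ‖b‖ ‖Σ ξᵢ ζᵢ‖`. Hence
`Σ ξᵢ ζᵢ ↦ Σ ξᵢ b ζᵢ` is a well-defined bounded operator on the dense subspace `[α𝔥]`, and its
extension is `ρ_α(b)`. If `ρ_α(b) = 0` then `α b = 0`, so `𝔅 b = 0`, so `b 𝔅 = 0` and `b = 0` by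
nondegeneracy of `𝔅`.
-/

noncomputable section
open ContinuousLinearMap

open scoped InnerProductSpace

theorem norm_apply_le_of_sq_le_star_mul {A E : Type*} [NormedRing A] [StarRing A] [CStarRing A]
    [NormedAlgebra ℂ A] [StarModule ℂ A] [NormedAddCommGroup E] [NormedSpace ℂ E]
    (S : StarSubalgebra ℂ A) (f : A →L[ℂ] E) {a : ℝ} (ha : 0 ≤ a)
    (h : ∀ b ∈ S, ‖f b‖ ^ 2 ≤ a * ‖f (star b * b)‖) {b : A} (hb : b ∈ S) :
    ‖f b‖ ≤ a * ‖b‖ := by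
  set T := (fun b => ‖f b‖) '' {b | b ∈ S ∧ ‖b‖ ≤ 1}
  have hT : BddAbove T := by
    refine ⟨‖f‖, ?_⟩
    rintro _ ⟨b, ⟨-, hb1⟩, rfl⟩
    exact (f.le_opNorm b).trans (mul_le_of_le_one_right (norm_nonneg f) hb1)
  set M := sSup T
  have le_M : ∀ b ∈ S, ‖b‖ ≤ 1 → ‖f b‖ ≤ M := fun b hb hb1 => le_csSup hT ⟨b, ⟨hb, hb1⟩, rfl⟩
  have hM0 : 0 ≤ M := (norm_nonneg _).trans (le_M 0 S.zero_mem (by simp))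
  -- `star b * b` stays in the unit ball, so `‖f b‖ ^ 2 ≤ a * M` there.
  have hM : M ≤ √(a * M) := by
    refine csSup_le ⟨_, 0, ⟨S.zero_mem, by simp⟩, rfl⟩ ?_
    rintro _ ⟨b, ⟨hb, hb1⟩, rfl⟩
    refine Real.le_sqrt_of_sq_le ((h b hb).trans (mul_le_mul_of_nonneg_left (le_M _ ?_ ?_) ha))
    · exact mul_mem (star_mem hb) hb
    · rw [CStarRing.norm_star_mul_self]
      nlinarith [norm_nonneg b]
  have hMa : M ≤ a := by
    have := (Real.le_sqrt hM0 (by positivity)).1 hM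
    nlinarith
  rcases eq_or_ne b 0 with rfl | hb0
  · simp
  have hnb : 0 < ‖b‖ := norm_pos_iff.2 hb0
  have hu := le_M ((‖b‖⁻¹ : ℂ) • b) (S.smul_mem hb _) (by
    rw [norm_smul, norm_inv, Complex.norm_real, norm_norm, inv_mul_cancel₀ hnb.ne'])
  rw [map_smul, norm_smul, norm_inv, Complex.norm_real, norm_norm, inv_mul_le_iff₀ hnb] at hu
  nlinarith

namespace CStarFactorization

variable {𝔥 H : Type*} [NormedAddCommGroup 𝔥] [InnerProductSpace ℂ 𝔥]
  [NormedAddCommGroup H] [InnerProductSpace ℂ H] (α : Set (𝔥 →L[ℂ] H))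

/-- `[α𝔥]` before taking the closure. -/
def rangeSpan : Submodule ℂ H := Submodule.span ℂ {x | ∃ ξ ∈ α, ∃ ζ : 𝔥, ξ ζ = x}

/-- `sumComp α t c = Σ_ξ ξ (c (t ξ))`. -/
def sumComp : (α →₀ 𝔥) →ₗ[ℂ] (𝔥 →L[ℂ] 𝔥) →L[ℂ] H :=
  Finsupp.lsum ℂ fun ξ => (compL ℂ (𝔥 →L[ℂ] 𝔥) 𝔥 H ξ ∘L apply ℂ 𝔥).toLinearMap

variable {α}

theorem sumComp_apply (t : α →₀ 𝔥) (c : 𝔥 →L[ℂ] 𝔥) :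
    sumComp α t c = t.sum fun ξ ζ => (ξ : 𝔥 →L[ℂ] H) (c ζ) := by
  simp [sumComp, Finsupp.lsum_apply, Finsupp.sum]

theorem sumComp_single (ξ : α) (ζ : 𝔥) (c : 𝔥 →L[ℂ] 𝔥) :
    sumComp α (Finsupp.single ξ ζ) c = (ξ : 𝔥 →L[ℂ] H) (c ζ) := by
  simp [sumComp_apply]

theorem denseRange_sumComp_one (hα𝔥 : (rangeSpan α).topologicalClosure = ⊤) :
    DenseRange ((apply ℂ H 1).toLinearMap ∘ₗ sumComp α) := by
  have hle : rangeSpan α ≤ LinearMap.range ((apply ℂ H 1).toLinearMap ∘ₗ sumComp α) := by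
    refine Submodule.span_le.2 ?_
    rintro _ ⟨ξ, hξ, ζ, rfl⟩
    exact ⟨Finsupp.single ⟨ξ, hξ⟩ ζ, by simp [sumComp_single]⟩
  rw [DenseRange, ← LinearMap.coe_range]
  exact (Submodule.dense_iff_topologicalClosure_eq_top.2 hα𝔥).mono hle

theorem ext_of_apply_apply (hα𝔥 : (rangeSpan α).topologicalClosure = ⊤) {A B : H →L[ℂ] H}
    (h : ∀ ξ ∈ α, ∀ ζ : 𝔥, A (ξ ζ) = B (ξ ζ)) : A = B :=
  ext_on (Submodule.dense_iff_topologicalClosure_eq_top.2 hα𝔥) (by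
    rintro _ ⟨ξ, hξ, ζ, rfl⟩
    exact h ξ hξ ζ)

theorem topologicalClosure_span_range_eq_top {𝔅d : Set (𝔥 →L[ℂ] 𝔥)}
    (h𝔅dnd : (Submodule.span ℂ {x : 𝔥 | ∃ b ∈ 𝔅d, ∃ ζ : 𝔥, b ζ = x}).topologicalClosure = ⊤)
    (hα𝔥 : (rangeSpan α).topologicalClosure = ⊤) {ρ : (𝔥 →L[ℂ] 𝔥) → (H →L[ℂ] H)}
    (hρ : ∀ b ∈ 𝔅d, ∀ ξ ∈ α, ∀ ζ : 𝔥, ρ b (ξ ζ) = ξ (b ζ)) :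
    (Submodule.span ℂ {x : H | ∃ b ∈ 𝔅d, ∃ y : H, ρ b y = x}).topologicalClosure = ⊤ := by
  set N := Submodule.span ℂ {x : H | ∃ b ∈ 𝔅d, ∃ y : H, ρ b y = x}
  rw [eq_top_iff, ← hα𝔥]
  refine Submodule.topologicalClosure_minimal _ (Submodule.span_le.2 ?_)
    N.isClosed_topologicalClosure
  rintro _ ⟨ξ, hξ, ζ, rfl⟩
  have hle : (Submodule.span ℂ {x : 𝔥 | ∃ b ∈ 𝔅d, ∃ ζ : 𝔥, b ζ = x}).topologicalClosure ≤
      N.topologicalClosure.comap (ξ : 𝔥 →ₗ[ℂ] H) := by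
    refine Submodule.topologicalClosure_minimal _ (Submodule.span_le.2 ?_)
      (N.isClosed_topologicalClosure.preimage ξ.continuous)
    rintro _ ⟨b, hb, w, rfl⟩
    show ξ (b w) ∈ N.topologicalClosure
    rw [← hρ b hb ξ hξ w]
    exact N.le_topologicalClosure (Submodule.subset_span ⟨b, hb, _, rfl⟩)
  rw [h𝔅dnd] at hle
  exact hle Submodule.mem_top

variable [CompleteSpace 𝔥] [CompleteSpace H]

variable (α) in
def commutant : StarSubalgebra ℂ (𝔥 →L[ℂ] 𝔥) :=
  StarSubalgebra.centralizer ℂ (Set.image2 (fun ξ ξ' => adjoint ξ ∘L ξ') α α)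

theorem comp_comm_of_mem_commutant {b : 𝔥 →L[ℂ] 𝔥} (hb : b ∈ commutant α) {ξ ξ' : 𝔥 →L[ℂ] H}
    (hξ : ξ ∈ α) (hξ' : ξ' ∈ α) : (adjoint ξ ∘L ξ') ∘L b = b ∘L (adjoint ξ ∘L ξ') :=
  ((StarSubalgebra.mem_centralizer_iff ℂ).1 hb _ (Set.mem_image2_of_mem hξ hξ')).1

theorem inner_apply_apply_of_mem_commutant {b : 𝔥 →L[ℂ] 𝔥} (hb : b ∈ commutant α)
    {ξ ξ' : 𝔥 →L[ℂ] H} (hξ : ξ ∈ α) (hξ' : ξ' ∈ α) (ζ ζ' : 𝔥) :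
    ⟪ξ (b ζ), ξ' ζ'⟫_ℂ = ⟪ξ ζ, ξ' (adjoint b ζ')⟫_ℂ := by
  have hcomm := congr($(comp_comm_of_mem_commutant (star_mem hb) hξ hξ') ζ')
  simp only [comp_apply, star_eq_adjoint] at hcomm
  calc ⟪ξ (b ζ), ξ' ζ'⟫_ℂ = ⟪ζ, adjoint b (adjoint ξ (ξ' ζ'))⟫_ℂ := by
        rw [adjoint_inner_right, adjoint_inner_right]
    _ = ⟪ξ ζ, ξ' (adjoint b ζ')⟫_ℂ := by rw [← hcomm, adjoint_inner_right]

theorem inner_sumComp {b : 𝔥 →L[ℂ] 𝔥} (hb : b ∈ commutant α) (t t' : α →₀ 𝔥)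
    (c : 𝔥 →L[ℂ] 𝔥) :
    ⟪sumComp α t b, sumComp α t' c⟫_ℂ = ⟪sumComp α t 1, sumComp α t' (adjoint b ∘L c)⟫_ℂ := by
  simp only [sumComp_apply, Finsupp.sum_inner, Finsupp.inner_sum, one_apply_eq_self, comp_apply,
    inner_apply_apply_of_mem_commutant hb (Subtype.prop _) (Subtype.prop _)]

theorem sq_norm_sumComp_le {b : 𝔥 →L[ℂ] 𝔥} (hb : b ∈ commutant α) (t : α →₀ 𝔥) :
    ‖sumComp α t b‖ ^ 2 ≤ ‖sumComp α t 1‖ * ‖sumComp α t (star b * b)‖ :=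
  calc ‖sumComp α t b‖ ^ 2 = RCLike.re ⟪sumComp α t b, sumComp α t b⟫_ℂ :=
        (inner_self_eq_norm_sq _).symm
    _ = RCLike.re ⟪sumComp α t 1, sumComp α t (star b * b)⟫_ℂ := by
        rw [inner_sumComp hb, star_eq_adjoint, mul_def]
    _ ≤ ‖sumComp α t 1‖ * ‖sumComp α t (star b * b)‖ :=
        (RCLike.re_le_norm _).trans (norm_inner_le_norm _ _)

theorem norm_sumComp_le {b : 𝔥 →L[ℂ] 𝔥} (hb : b ∈ commutant α) (t : α →₀ 𝔥) :
    ‖sumComp α t b‖ ≤ ‖b‖ * ‖sumComp α t 1‖ := by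
  rw [mul_comm]
  exact norm_apply_le_of_sq_le_star_mul (commutant α) (sumComp α t) (norm_nonneg _)
    (fun b hb => sq_norm_sumComp_le hb t) hb

variable (α) in
/-- `ρ_α(b)`: the continuous extension of `Σ ξ ζ ↦ Σ ξ (b ζ)` from `[α𝔥]` to `H`; it is only
meaningful for `b ∈ commutant α`. -/
def rep (b : 𝔥 →L[ℂ] 𝔥) : H →L[ℂ] H :=
  ((apply ℂ H b).toLinearMap ∘ₗ sumComp α).extendOfNorm ((apply ℂ H 1).toLinearMap ∘ₗ sumComp α)

theorem rep_sumComp (hα𝔥 : (rangeSpan α).topologicalClosure = ⊤) {b : 𝔥 →L[ℂ] 𝔥}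
    (hb : b ∈ commutant α) (t : α →₀ 𝔥) : rep α b (sumComp α t 1) = sumComp α t b :=
  LinearMap.extendOfNorm_eq (denseRange_sumComp_one hα𝔥) ⟨‖b‖, norm_sumComp_le hb⟩ t

theorem rep_apply_apply (hα𝔥 : (rangeSpan α).topologicalClosure = ⊤) {b : 𝔥 →L[ℂ] 𝔥}
    (hb : b ∈ commutant α) {ξ : 𝔥 →L[ℂ] H} (hξ : ξ ∈ α) (ζ : 𝔥) : rep α b (ξ ζ) = ξ (b ζ) := by
  simpa [sumComp_single] using rep_sumComp hα𝔥 hb (Finsupp.single ⟨ξ, hξ⟩ ζ)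

theorem rep_add (hα𝔥 : (rangeSpan α).topologicalClosure = ⊤) {b b' : 𝔥 →L[ℂ] 𝔥}
    (hb : b ∈ commutant α) (hb' : b' ∈ commutant α) : rep α (b + b') = rep α b + rep α b' :=
  ext_of_apply_apply hα𝔥 fun ξ hξ ζ => by
    simp [rep_apply_apply hα𝔥 (add_mem hb hb') hξ, rep_apply_apply hα𝔥 hb hξ,
      rep_apply_apply hα𝔥 hb' hξ]

theorem rep_smul (hα𝔥 : (rangeSpan α).topologicalClosure = ⊤) {b : 𝔥 →L[ℂ] 𝔥}
    (hb : b ∈ commutant α) (c : ℂ) : rep α (c • b) = c • rep α b :=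
  ext_of_apply_apply hα𝔥 fun ξ hξ ζ => by
    simp [rep_apply_apply hα𝔥 (SMulMemClass.smul_mem c hb) hξ, rep_apply_apply hα𝔥 hb hξ]

theorem rep_comp (hα𝔥 : (rangeSpan α).topologicalClosure = ⊤) {b b' : 𝔥 →L[ℂ] 𝔥}
    (hb : b ∈ commutant α) (hb' : b' ∈ commutant α) :
    rep α (b ∘L b') = rep α b ∘L rep α b' := by
  have hbb' : b ∘L b' ∈ commutant α := mul_mem hb hb'
  exact ext_of_apply_apply hα𝔥 fun ξ hξ ζ => by
    simp [rep_apply_apply hα𝔥 hbb' hξ, rep_apply_apply hα𝔥 hb hξ, rep_apply_apply hα𝔥 hb' hξ]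

theorem rep_adjoint (hα𝔥 : (rangeSpan α).topologicalClosure = ⊤) {b : 𝔥 →L[ℂ] 𝔥}
    (hb : b ∈ commutant α) : rep α (adjoint b) = adjoint (rep α b) := by
  have hdense := denseRange_sumComp_one hα𝔥
  have hb' : adjoint b ∈ commutant α := by simpa [star_eq_adjoint] using star_mem hb
  refine DFunLike.coe_injective <|
    hdense.equalizer (rep α _).continuous (adjoint (rep α b)).continuous (funext fun t => ?_)
  refine hdense.eq_of_inner_left ℂ fun t' => ?_
  simp only [Function.comp_apply, LinearMap.coe_comp, coe_coe, apply_apply]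
  rw [adjoint_inner_left, rep_sumComp hα𝔥 hb, rep_sumComp hα𝔥 hb', inner_sumComp hb',
    adjoint_adjoint, show b ∘L 1 = b from mul_one b]

theorem subset_commutant {𝔅 𝔅d : Set (𝔥 →L[ℂ] 𝔥)}
    (hαα : clspan (Set.image2 (fun (ξ ξ' : 𝔥 →L[ℂ] H) => adjoint ξ ∘L ξ') α α) = 𝔅)
    (hcomm : ∀ b ∈ 𝔅, ∀ c ∈ 𝔅d, b ∘L c = c ∘L b) : 𝔅d ⊆ commutant α := by
  have hmem : ∀ ξ ∈ α, ∀ ξ' ∈ α, adjoint ξ ∘L ξ' ∈ 𝔅 := fun ξ hξ ξ' hξ' =>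
    hαα ▸ Submodule.le_topologicalClosure _ (Submodule.subset_span ⟨ξ, hξ, ξ', hξ', rfl⟩)
  intro c hc
  rw [SetLike.mem_coe, commutant, StarSubalgebra.mem_centralizer_iff]
  rintro _ ⟨ξ, hξ, ξ', hξ', rfl⟩
  refine ⟨hcomm _ (hmem ξ hξ ξ' hξ') c hc, ?_⟩
  rw [star_eq_adjoint, adjoint_comp, adjoint_adjoint]
  exact hcomm _ (hmem ξ' hξ' ξ hξ) c hc

theorem eq_zero_of_forall_comp_eq_zero {𝔅 𝔅d : Set (𝔥 →L[ℂ] 𝔥)}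
    (hαα : clspan (Set.image2 (fun (ξ ξ' : 𝔥 →L[ℂ] H) => adjoint ξ ∘L ξ') α α) = 𝔅)
    (hcomm : ∀ b ∈ 𝔅, ∀ c ∈ 𝔅d, b ∘L c = c ∘L b)
    (h𝔅nd : (Submodule.span ℂ {x : 𝔥 | ∃ b ∈ 𝔅, ∃ ζ : 𝔥, b ζ = x}).topologicalClosure = ⊤)
    {b : 𝔥 →L[ℂ] 𝔥} (hb : b ∈ 𝔅d) (h : ∀ ξ ∈ α, ξ ∘L b = 0) : b = 0 := by
  have hker : 𝔅 ⊆ (((compL ℂ 𝔥 𝔥 𝔥).flip b).ker : Set (𝔥 →L[ℂ] 𝔥)) := by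
    rw [← hαα]
    refine SetLike.coe_subset_coe.2 (Submodule.topologicalClosure_minimal _
      (Submodule.span_le.2 ?_) (isClosed_ker _))
    rintro _ ⟨ξ, -, ξ', hξ', rfl⟩
    simp [comp_assoc, h ξ' hξ']
  refine ext_on (Submodule.dense_iff_topologicalClosure_eq_top.2 h𝔅nd) ?_
  rintro _ ⟨c, hc, ζ, rfl⟩
  have hcb : c ∘L b = 0 := by simpa using hker hc
  rw [zero_apply, ← comp_apply, ← hcomm c hc b hb, hcb, zero_apply]

end CStarFactorization

theorem stmt5_general
    {𝔥 H : Type*} [NormedAddCommGroup 𝔥] [InnerProductSpace ℂ 𝔥] [CompleteSpace 𝔥]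
    [NormedAddCommGroup H] [InnerProductSpace ℂ H] [CompleteSpace H]
    (𝔅 𝔅d : Set (𝔥 →L[ℂ] 𝔥))
    -- they commute and are nondegenerate:
    (hcomm : ∀ b ∈ 𝔅, ∀ c ∈ 𝔅d, b ∘L c = c ∘L b)
    (h𝔅nd : (Submodule.span ℂ {x : 𝔥 | ∃ b ∈ 𝔅, ∃ ζ : 𝔥, b ζ = x}).topologicalClosure = ⊤)
    (h𝔅dnd : (Submodule.span ℂ {x : 𝔥 | ∃ b ∈ 𝔅d, ∃ ζ : 𝔥, b ζ = x}).topologicalClosure = ⊤)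
    -- `α` is a C*-factorization of `H` with respect to `(𝔥,𝔅,𝔅†)`:
    (α : Set (𝔥 →L[ℂ] H))
    (hαα : clspan (Set.image2 (fun (ξ ξ' : 𝔥 →L[ℂ] H) => adjoint ξ ∘L ξ') α α) = 𝔅)
    (hα𝔥 : (Submodule.span ℂ {x : H | ∃ ξ ∈ α, ∃ ζ : 𝔥, ξ ζ = x}).topologicalClosure = ⊤) :
    ∃ ρ : (𝔥 →L[ℂ] 𝔥) → (H →L[ℂ] H),
      -- defining property
      (∀ b ∈ 𝔅d, ∀ ξ ∈ α, ∀ ζ : 𝔥, ρ b (ξ ζ) = ξ (b ζ)) ∧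
      -- uniqueness: any map with the defining property agrees with `ρ` on `𝔅†`
      (∀ ρ' : (𝔥 →L[ℂ] 𝔥) → (H →L[ℂ] H),
        (∀ b ∈ 𝔅d, ∀ ξ ∈ α, ∀ ζ : 𝔥, ρ' b (ξ ζ) = ξ (b ζ)) → ∀ b ∈ 𝔅d, ρ' b = ρ b) ∧
      -- `ρ` is a representation on `𝔅†`: additive, homogeneous, multiplicative, star-preserving
      (∀ b ∈ 𝔅d, ∀ b' ∈ 𝔅d, ρ (b + b') = ρ b + ρ b') ∧
      (∀ b ∈ 𝔅d, ∀ c : ℂ, ρ (c • b) = c • ρ b) ∧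
      (∀ b ∈ 𝔅d, ∀ b' ∈ 𝔅d, ρ (b ∘L b') = ρ b ∘L ρ b') ∧
      (∀ b ∈ 𝔅d, ρ (adjoint b) = adjoint (ρ b)) ∧
      -- faithful
      (∀ b ∈ 𝔅d, ρ b = 0 → b = 0) ∧
      -- nondegenerate
      ((Submodule.span ℂ {x : H | ∃ b ∈ 𝔅d, ∃ y : H, ρ b y = x}).topologicalClosure = ⊤) := by
  open CStarFactorization in
  have h𝔅d : 𝔅d ⊆ commutant α := subset_commutant hαα hcomm
  have hρ : ∀ b ∈ 𝔅d, ∀ ξ ∈ α, ∀ ζ : 𝔥, rep α b (ξ ζ) = ξ (b ζ) :=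
    fun b hb ξ hξ => rep_apply_apply hα𝔥 (h𝔅d hb) hξ
  refine ⟨rep α, hρ, ?_, fun b hb b' hb' => rep_add hα𝔥 (h𝔅d hb) (h𝔅d hb'),
    fun b hb => rep_smul hα𝔥 (h𝔅d hb), fun b hb b' hb' => rep_comp hα𝔥 (h𝔅d hb) (h𝔅d hb'),
    fun b hb => rep_adjoint hα𝔥 (h𝔅d hb), ?_, topologicalClosure_span_range_eq_top h𝔅dnd hα𝔥 hρ⟩
  · exact fun ρ' hρ' b hb =>
      ext_of_apply_apply hα𝔥 fun ξ hξ ζ => by rw [hρ' b hb ξ hξ ζ, hρ b hb ξ hξ ζ]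
  · refine fun b hb hρb => eq_zero_of_forall_comp_eq_zero hαα hcomm h𝔅nd hb fun ξ hξ => ?_
    ext ζ
    simpa [hρb] using (hρ b hb ξ hξ ζ).symm

/-- Let `(𝔥,𝔅,𝔅†)` be a C*-base and `α` a C*-factorization of `H` with
respect to it.  Then there is a unique map `ρ_α : 𝔅† → L(H)` with
`ρ_α(b†)(ξζ) = ξ(b†ζ)` for `b† ∈ 𝔅†, ξ ∈ α, ζ ∈ 𝔥`; it is a (linear, multiplicative,
star-preserving) representation, and it is faithful and nondegenerate. -/
theorem stmt5
    {𝔥 H : Type*} [NormedAddCommGroup 𝔥] [InnerProductSpace ℂ 𝔥] [CompleteSpace 𝔥]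
    [NormedAddCommGroup H] [InnerProductSpace ℂ H] [CompleteSpace H]
    (𝔅 𝔅d : Set (𝔥 →L[ℂ] 𝔥))
    -- `𝔅` and `𝔅†` are C*-subalgebras of `L(𝔥)`:
    (h𝔅closed : clspan 𝔅 = 𝔅) (h𝔅mul : ∀ b ∈ 𝔅, ∀ b' ∈ 𝔅, b ∘L b' ∈ 𝔅)
    (h𝔅star : ∀ b ∈ 𝔅, adjoint b ∈ 𝔅)
    (h𝔅dclosed : clspan 𝔅d = 𝔅d) (h𝔅dmul : ∀ b ∈ 𝔅d, ∀ b' ∈ 𝔅d, b ∘L b' ∈ 𝔅d)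
    (h𝔅dstar : ∀ b ∈ 𝔅d, adjoint b ∈ 𝔅d)
    -- they commute and are nondegenerate:
    (hcomm : ∀ b ∈ 𝔅, ∀ c ∈ 𝔅d, b ∘L c = c ∘L b)
    (h𝔅nd : (Submodule.span ℂ {x : 𝔥 | ∃ b ∈ 𝔅, ∃ ζ : 𝔥, b ζ = x}).topologicalClosure = ⊤)
    (h𝔅dnd : (Submodule.span ℂ {x : 𝔥 | ∃ b ∈ 𝔅d, ∃ ζ : 𝔥, b ζ = x}).topologicalClosure = ⊤)
    -- `α` is a C*-factorization of `H` with respect to `(𝔥,𝔅,𝔅†)`: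
    (α : Set (𝔥 →L[ℂ] H))
    (hαclosed : clspan α = α)
    (hαα : clspan (Set.image2 (fun (ξ ξ' : 𝔥 →L[ℂ] H) => adjoint ξ ∘L ξ') α α) = 𝔅)
    (hα𝔅 : clspan (Set.image2 (fun (ξ : 𝔥 →L[ℂ] H) (b : 𝔥 →L[ℂ] 𝔥) => ξ ∘L b) α 𝔅) = α)
    (hα𝔥 : (Submodule.span ℂ {x : H | ∃ ξ ∈ α, ∃ ζ : 𝔥, ξ ζ = x}).topologicalClosure = ⊤) :
    ∃ ρ : (𝔥 →L[ℂ] 𝔥) → (H →L[ℂ] H),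
      -- defining property
      (∀ b ∈ 𝔅d, ∀ ξ ∈ α, ∀ ζ : 𝔥, ρ b (ξ ζ) = ξ (b ζ)) ∧
      -- uniqueness: any map with the defining property agrees with `ρ` on `𝔅†`
      (∀ ρ' : (𝔥 →L[ℂ] 𝔥) → (H →L[ℂ] H),
        (∀ b ∈ 𝔅d, ∀ ξ ∈ α, ∀ ζ : 𝔥, ρ' b (ξ ζ) = ξ (b ζ)) → ∀ b ∈ 𝔅d, ρ' b = ρ b) ∧
      -- `ρ` is a representation on `𝔅†`: additive, homogeneous, multiplicative, star-preserving
      (∀ b ∈ 𝔅d, ∀ b' ∈ 𝔅d, ρ (b + b') = ρ b + ρ b') ∧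
      (∀ b ∈ 𝔅d, ∀ c : ℂ, ρ (c • b) = c • ρ b) ∧
      (∀ b ∈ 𝔅d, ∀ b' ∈ 𝔅d, ρ (b ∘L b') = ρ b ∘L ρ b') ∧
      (∀ b ∈ 𝔅d, ρ (adjoint b) = adjoint (ρ b)) ∧
      -- faithful
      (∀ b ∈ 𝔅d, ρ b = 0 → b = 0) ∧
      -- nondegenerate
      ((Submodule.span ℂ {x : H | ∃ b ∈ 𝔅d, ∃ y : H, ρ b y = x}).topologicalClosure = ⊤) :=
  stmt5_general 𝔅 𝔅d hcomm h𝔅nd h𝔅dnd α hαα hα𝔥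
end
end

section
/- Let α, β be compatible C*-factorizations of a Hilbert space H with respect to C*-bases (𝔥,𝔅,𝔅†) and (𝔨,ℭ,ℭ†), respectively, meaning [ρ_α(𝔅†)β] = β and [ρ_β(ℭ†)α] = α. Then the C*-algebras ρ_α(𝔅†) and ρ_β(ℭ†) commute in L(H). -/
noncomputable section
open ContinuousLinearMap

/-- Let `α` and `β` be compatible C*-factorizations of `H` with respect to
C*-bases `(𝔥,𝔅,𝔅†)` and `(𝔨,ℭ,ℭ†)` — compatibility meaning `[ρ_α(𝔅†)β] = β` and
`[ρ_β(ℭ†)α] = α`.  Then the C*-algebras `ρ_α(𝔅†)` and `ρ_β(ℭ†)` commute in `L(H)`. -/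
theorem stmt7
    {𝔥 𝔨 H : Type*} [NormedAddCommGroup 𝔥] [InnerProductSpace ℂ 𝔥] [CompleteSpace 𝔥]
    [NormedAddCommGroup 𝔨] [InnerProductSpace ℂ 𝔨] [CompleteSpace 𝔨]
    [NormedAddCommGroup H] [InnerProductSpace ℂ H] [CompleteSpace H]
    (𝔅 𝔅d : Set (𝔥 →L[ℂ] 𝔥)) (ℭ ℭd : Set (𝔨 →L[ℂ] 𝔨))
    -- `α` is a C*-factorization of `H` with respect to `(𝔥,𝔅,𝔅†)`:
    (α : Set (𝔥 →L[ℂ] H))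
    (hαclosed : clspan α = α)
    (hαα : clspan (Set.image2 (fun (ξ ξ' : 𝔥 →L[ℂ] H) => adjoint ξ ∘L ξ') α α) = 𝔅)
    (hα𝔅 : clspan (Set.image2 (fun (ξ : 𝔥 →L[ℂ] H) (b : 𝔥 →L[ℂ] 𝔥) => ξ ∘L b) α 𝔅) = α)
    (hα𝔥 : (Submodule.span ℂ {x : H | ∃ ξ ∈ α, ∃ ζ : 𝔥, ξ ζ = x}).topologicalClosure = ⊤)
    -- `β` is a C*-factorization of `H` with respect to `(𝔨,ℭ,ℭ†)`:
    (β : Set (𝔨 →L[ℂ] H))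
    (hβclosed : clspan β = β)
    (hββ : clspan (Set.image2 (fun (η η' : 𝔨 →L[ℂ] H) => adjoint η ∘L η') β β) = ℭ)
    (hβℭ : clspan (Set.image2 (fun (η : 𝔨 →L[ℂ] H) (c : 𝔨 →L[ℂ] 𝔨) => η ∘L c) β ℭ) = β)
    (hβ𝔨 : (Submodule.span ℂ {x : H | ∃ η ∈ β, ∃ ζ : 𝔨, η ζ = x}).topologicalClosure = ⊤)
    -- the induced representations, determined by `ρ_α(b†)∘ξ = ξ∘b†`, `ρ_β(c†)∘η = η∘c†`:
    (ρα : (𝔥 →L[ℂ] 𝔥) → (H →L[ℂ] H)) (ρβ : (𝔨 →L[ℂ] 𝔨) → (H →L[ℂ] H))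
    (hρα : ∀ b ∈ 𝔅d, ∀ ξ ∈ α, ρα b ∘L ξ = ξ ∘L b)
    (hρβ : ∀ c ∈ ℭd, ∀ η ∈ β, ρβ c ∘L η = η ∘L c)
    -- compatibility `α ⊥ β`:
    (hc1 : clspan (Set.image2 (fun (b : 𝔥 →L[ℂ] 𝔥) (η : 𝔨 →L[ℂ] H) => ρα b ∘L η) 𝔅d β) = β)
    (hc2 : clspan (Set.image2 (fun (c : 𝔨 →L[ℂ] 𝔨) (ξ : 𝔥 →L[ℂ] H) => ρβ c ∘L ξ) ℭd α) = α) :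
    ∀ b ∈ 𝔅d, ∀ c ∈ ℭd, ρα b ∘L ρβ c = ρβ c ∘L ρα b := by
  intro b hb c hc
  -- Step 1: for `ξ ∈ α`, compatibility gives `ρβ c ∘ ξ ∈ α`.
  have hmem : ∀ ξ ∈ α, ρβ c ∘L ξ ∈ α := by
    intro ξ hξ
    rw [← hc2]
    exact Submodule.le_topologicalClosure _
      (Submodule.subset_span (Set.mem_image2_of_mem hc hξ))
  -- Step 2: the two compositions agree after composing with any `ξ ∈ α`.
  have key : ∀ ξ ∈ α, (ρα b ∘L ρβ c) ∘L ξ = (ρβ c ∘L ρα b) ∘L ξ := by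
    intro ξ hξ
    have h1 := hρα b hb (ρβ c ∘L ξ) (hmem ξ hξ)
    have h2 := hρα b hb ξ hξ
    calc (ρα b ∘L ρβ c) ∘L ξ = ρα b ∘L (ρβ c ∘L ξ) := by rw [comp_assoc]
      _ = (ρβ c ∘L ξ) ∘L b := h1
      _ = ρβ c ∘L (ξ ∘L b) := by rw [comp_assoc]
      _ = ρβ c ∘L (ρα b ∘L ξ) := by rw [h2]
      _ = (ρβ c ∘L ρα b) ∘L ξ := by rw [comp_assoc]
  -- Step 3: extend by density of `[α𝔥] = H`.
  set S : Set H := {x : H | ∃ ξ ∈ α, ∃ ζ : 𝔥, ξ ζ = x} with hS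
  have heqOnS : Set.EqOn (ρα b ∘L ρβ c) (ρβ c ∘L ρα b) S := by
    rintro x ⟨ξ, hξ, ζ, rfl⟩
    have := congrArg (fun (T : 𝔥 →L[ℂ] H) => T ζ) (key ξ hξ)
    simpa using this
  have heqOnSpan : Set.EqOn (ρα b ∘L ρβ c) (ρβ c ∘L ρα b)
      (Submodule.span ℂ S : Set H) := by
    intro x hx
    exact LinearMap.eqOn_span heqOnS hx
  have hdense : Dense (Submodule.span ℂ S : Set H) := by
    rw [← Submodule.dense_iff_topologicalClosure_eq_top] at hα𝔥
    exact hα𝔥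
  exact coeFn_injective (Continuous.ext_on hdense (ρα b ∘L ρβ c).continuous
    (ρβ c ∘L ρα b).continuous heqOnSpan)
end
end
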